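/- Let D be an oriented graph, let D' be a subdigraph of D, and let S be a minimum hull set of D in the P3 convexity. Then |S ∩ V(D')| ≤ hn_{P3}(D'), where hn_{P3}(D') is the P3 hull number of D'. -/

import Mathlib

/-! Basic machinery for convexity on oriented graphs. -/

/-- A directed walk along the arc relation `A` from `u` to `v`,
recorded as the (nonempty) list of its vertices. Its length is `l.length - 1`. -/
def DiWalk {V : Type*} (A : V → V → Prop) (u v : V) (l : List V) : Prop :=
  l.head? = some u ∧ l.getLast? = some v ∧ l.Chain' A

/-- A shortest directed walk (geodesic) from `u` to `v`:
a directed walk of minimum length among all directed `(u,v)`-walks. -/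
def IsGeodesic {V : Type*} (A : V → V → Prop) (u v : V) (l : List V) : Prop :=
  DiWalk A u v l ∧ ∀ l', DiWalk A u v l' → l.length ≤ l'.length

/-- Geodetic interval: `u`, `v`, and all vertices lying on a shortest directed
`(u,v)`-path or on a shortest directed `(v,u)`-path. -/
def geoInterval {V : Type*} (A : V → V → Prop) (u v : V) : Set V :=
  {u, v} ∪ {w | (∃ l, IsGeodesic A u v l ∧ w ∈ l) ∨ (∃ l, IsGeodesic A v u l ∧ w ∈ l)}

/-- P3 interval: `u`, `v`, and all vertices lying on a directed `(u,v)`- or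
`(v,u)`-path of length two. -/
def p3Interval {V : Type*} (A : V → V → Prop) (u v : V) : Set V :=
  {u, v} ∪ {w | (A u w ∧ A w v) ∨ (A v w ∧ A w u)}

/-- P3* interval: `u`, `v`, and all vertices lying on a shortest directed `(u,v)`- or
`(v,u)`-path of length two (i.e. the corresponding endpoints are not adjacent). -/
def p3sInterval {V : Type*} (A : V → V → Prop) (u v : V) : Set V :=
  {u, v} ∪ {w | (A u w ∧ A w v ∧ ¬ A u v) ∨ (A v w ∧ A w u ∧ ¬ A v u)}

/-- A set is convex for the interval function `I` if it is closed under `I`. -/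
def IsConvexSet {V : Type*} (I : V → V → Set V) (C : Set V) : Prop :=
  ∀ u ∈ C, ∀ v ∈ C, I u v ⊆ C

/-- The convex hull of `S`: the smallest convex set containing `S`. -/
def convexHullD {V : Type*} (I : V → V → Set V) (S : Set V) : Set V :=
  ⋂₀ {C | IsConvexSet I C ∧ S ⊆ C}

/-- `S` is an interval set if applying `I` to pairs of `S` covers all vertices. -/
def IsIntervalSet {V : Type*} (I : V → V → Set V) (S : Set V) : Prop :=
  (⋃ u ∈ S, ⋃ v ∈ S, I u v) = Set.univ

/-- `S` is a hull set if its convex hull is the whole vertex set. -/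
def IsHullSet {V : Type*} (I : V → V → Set V) (S : Set V) : Prop :=
  convexHullD I S = Set.univ

/-- The interval number: minimum cardinality of an interval set. -/
noncomputable def intervalNumber {V : Type*} (I : V → V → Set V) : ℕ :=
  sInf {k | ∃ S : Set V, IsIntervalSet I S ∧ S.ncard = k}

/-- The hull number: minimum cardinality of a hull set. -/
noncomputable def hullNumber {V : Type*} (I : V → V → Set V) : ℕ :=
  sInf {k | ∃ S : Set V, IsHullSet I S ∧ S.ncard = k}

/-- `v` is reachable from `u` by a directed walk. -/
def Reach {V : Type*} (A : V → V → Prop) (u v : V) : Prop :=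
  ∃ l, DiWalk A u v l

/-- An oriented graph: no loops and at most one arc between any two vertices. -/
def IsOriented {V : Type*} (A : V → V → Prop) : Prop :=
  ∀ u v, A u v → ¬ A v u

/-- Strong connectivity. -/
def StronglyConnected {V : Type*} (A : V → V → Prop) : Prop :=
  ∀ u v, Reach A u v

/-- Connectivity of the underlying undirected graph. -/
def ConnectedD {V : Type*} (A : V → V → Prop) : Prop :=
  ∀ u v : V, Reach (fun a b => A a b ∨ A b a) u v

/-- A strong component: an equivalence class of mutual reachability. -/
def IsStrongComponent {V : Type*} (A : V → V → Prop) (C : Set V) : Prop :=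
  ∃ v, C = {u | Reach A u v ∧ Reach A v u}

/-- A sink strong component: a strong component with no arc leaving it. -/
def IsSinkComponent {V : Type*} (A : V → V → Prop) (C : Set V) : Prop :=
  IsStrongComponent A C ∧ ∀ u ∈ C, ∀ w, w ∉ C → ¬ A u w

/-- A source strong component: a strong component with no arc entering it. -/
def IsSourceComponent {V : Type*} (A : V → V → Prop) (C : Set V) : Prop :=
  IsStrongComponent A C ∧ ∀ u ∈ C, ∀ w, w ∉ C → ¬ A w u

/-- The out-section of `u`: all vertices reachable from `u`. -/
def outSection {V : Type*} (A : V → V → Prop) (u : V) : Set V :=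
  {w | Reach A u w}

/-- The in-section of `u`: all vertices from which `u` is reachable. -/
def inSection {V : Type*} (A : V → V → Prop) (u : V) : Set V :=
  {w | Reach A w u}

/-- A tournament: an oriented graph where every two distinct vertices are adjacent. -/
def IsTournament {V : Type*} (A : V → V → Prop) : Prop :=
  (∀ u v, A u v → ¬ A v u) ∧ ∀ u v : V, u ≠ v → A u v ∨ A v u

/-- The number of arcs of the digraph given by `A`. -/
noncomputable def arcCount {V : Type*} (A : V → V → Prop) : ℕ :=
  Nat.card {p : V × V // A p.1 p.2}


/-! Replace the part of a minimum hull set `S` of `D` lying in `V(D')` by a minimum hull set `S'`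
of `D'`. Every arc of `D'` is an arc of `D`, so P3-convex sets of `D` restrict to P3-convex sets
of `D'`; hence the hull of `S'` in `D` contains all of `V(D')`, and `(S \ V(D')) ∪ S'` is again a
hull set of `D`. Minimality of `S` then gives `|S| ≤ |S \ V(D')| + |S'|`. -/

section Hull

variable {V : Type*} (I : V → V → Set V)

lemma isConvexSet_convexHullD (S : Set V) : IsConvexSet I (convexHullD I S) :=
  fun _ hu _ hv _ hw => Set.mem_sInter.mpr fun C hC =>
    hC.1 _ (Set.mem_sInter.mp hu C hC) _ (Set.mem_sInter.mp hv C hC) hw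

lemma subset_convexHullD (S : Set V) : S ⊆ convexHullD I S :=
  fun _ hx => Set.mem_sInter.mpr fun _ hC => hC.2 hx

lemma convexHullD_min {S C : Set V} (hC : IsConvexSet I C) (hSC : S ⊆ C) :
    convexHullD I S ⊆ C :=
  fun _ hx => Set.mem_sInter.mp hx C ⟨hC, hSC⟩

lemma isHullSet_univ : IsHullSet I Set.univ :=
  Set.eq_univ_of_univ_subset (subset_convexHullD I Set.univ)

lemma exists_isHullSet_ncard_eq_hullNumber :
    ∃ S : Set V, IsHullSet I S ∧ S.ncard = hullNumber I :=
  Nat.sInf_mem (s := {k | ∃ S : Set V, IsHullSet I S ∧ S.ncard = k})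
    ⟨_, Set.univ, isHullSet_univ I, rfl⟩

lemma hullNumber_le_ncard {S : Set V} (hS : IsHullSet I S) : hullNumber I ≤ S.ncard :=
  Nat.sInf_le ⟨S, hS, rfl⟩

lemma IsHullSet.diff_union {S W R : Set V} (hS : IsHullSet I S)
    (hW : W ⊆ convexHullD I R) : IsHullSet I ((S \ W) ∪ R) := by
  have hR : R ⊆ convexHullD I ((S \ W) ∪ R) :=
    Set.subset_union_right.trans (subset_convexHullD I _)
  have hS' : S ⊆ convexHullD I ((S \ W) ∪ R) := by
    intro x hx
    by_cases hxW : x ∈ W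
    · exact convexHullD_min I (isConvexSet_convexHullD I _) hR (hW hxW)
    · exact subset_convexHullD I _ (Or.inl ⟨hx, hxW⟩)
  refine Set.eq_univ_of_univ_subset ?_
  rw [← hS]
  exact convexHullD_min I (isConvexSet_convexHullD I _) hS'

end Hull

section P3

variable {U V : Type*} {A' : U → U → Prop} {A : V → V → Prop} {f : U → V}

lemma IsConvexSet.preimage_p3Interval (hf : ∀ a b, A' a b → A (f a) (f b)) {C : Set V}
    (hC : IsConvexSet (p3Interval A) C) : IsConvexSet (p3Interval A') (f ⁻¹' C) := by
  rintro u hu v hv w ((rfl | rfl) | ⟨huw, hwv⟩ | ⟨hvw, hwu⟩)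
  · exact hu
  · exact hv
  · exact hC _ hu _ hv (Or.inr (Or.inl ⟨hf _ _ huw, hf _ _ hwv⟩))
  · exact hC _ hu _ hv (Or.inr (Or.inr ⟨hf _ _ hvw, hf _ _ hwu⟩))

lemma image_convexHullD_p3Interval_subset (hf : ∀ a b, A' a b → A (f a) (f b)) (S : Set U) :
    f '' convexHullD (p3Interval A') S ⊆ convexHullD (p3Interval A) (f '' S) :=
  Set.image_subset_iff.mpr <|
    convexHullD_min _ ((isConvexSet_convexHullD _ _).preimage_p3Interval hf)
      (Set.image_subset_iff.mp (subset_convexHullD _ _))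

end P3

theorem stmt_12_general {V : Type*} [Finite V] (A : V → V → Prop)
    (W : Set V) (A' : V → V → Prop)
    (hsub : ∀ u v, A' u v → A u v ∧ u ∈ W ∧ v ∈ W)
    (S : Set V) (hS : IsHullSet (p3Interval A) S)
    (hmin : S.ncard = hullNumber (p3Interval A)) :
    (S ∩ W).ncard ≤ hullNumber (p3Interval (fun a b : W => A' a.1 b.1)) := by
  obtain ⟨S', hS', hS'min⟩ :=
    exists_isHullSet_ncard_eq_hullNumber (p3Interval fun a b : W => A' a b)
  have hW : W ⊆ convexHullD (p3Interval A) (Subtype.val '' S') := by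
    have := image_convexHullD_p3Interval_subset (A := A) (f := Subtype.val)
      (fun a b h => (hsub a b h).1) S'
    rwa [hS', Set.image_univ, Subtype.range_coe] at this
  have hT := hS.diff_union _ hW
  suffices (S ∩ W).ncard + (S \ W).ncard ≤ (S \ W).ncard + S'.ncard by omega
  calc (S ∩ W).ncard + (S \ W).ncard = S.ncard := Set.ncard_inter_add_ncard_sdiff_eq_ncard S W
    _ ≤ ((S \ W) ∪ Subtype.val '' S').ncard := hmin ▸ hullNumber_le_ncard _ hT
    _ ≤ (S \ W).ncard + (Subtype.val '' S').ncard := Set.ncard_union_le _ _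
    _ = (S \ W).ncard + S'.ncard := by rw [Set.ncard_image_of_injective _ Subtype.val_injective]

/-- If `D'` (vertex set `W`, arc relation `A'`) is a subdigraph of
`D` and `S` is a minimum P3 hull set of `D`, then `|S ∩ W| ≤ hn_{P3}(D')`. -/
theorem stmt_12 {V : Type*} [Finite V] (A : V → V → Prop) (hA : IsOriented A)
    (W : Set V) (A' : V → V → Prop)
    (hsub : ∀ u v, A' u v → A u v ∧ u ∈ W ∧ v ∈ W)
    (S : Set V) (hS : IsHullSet (p3Interval A) S)
    (hmin : S.ncard = hullNumber (p3Interval A)) :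
    (S ∩ W).ncard ≤ hullNumber (p3Interval (fun a b : W => A' a.1 b.1)) :=
  stmt_12_general A W A' hsub S hS hmin
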